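/- Every vertex cover of the vertex-cover lower-bound graph G_{x,y} contains at least k − 1 nodes from each of the four cliques A_1, A_2, B_1, B_2, and at least 4·log k bit-nodes (nodes belonging to the union of the sets F_S and T_S over S ∈ {A_1, A_2, B_1, B_2}). -/
import Mathlib


/-- Vertices of the vertex-cover lower-bound graph.  The side `s : Bool`
distinguishes Alice (`false`, the `a`'s) from Bob (`true`, the `b`'s), and
`ℓ : Bool` distinguishes index `1` (`false`) from index `2` (`true`).
So `node false false i = a_1^i`, `node true true i = b_2^i`,
`f s ℓ h = f_S^h` and `t s ℓ h = t_S^h` for the corresponding set `S`. -/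
inductive VCVertex (k logk : ℕ) where
  | node (s ℓ : Bool) (i : Fin k)
  | f (s ℓ : Bool) (h : Fin logk)
  | t (s ℓ : Bool) (h : Fin logk)
deriving DecidableEq

/-- Base relation generating the edges of the vertex-cover lower-bound graph
`G_{x,y}`: the four cliques; each node joined to exactly its bit-nodes `bin`;
the 4-cycles `(f_{Aℓ}^h, t_{Aℓ}^h, f_{Bℓ}^h, t_{Bℓ}^h)`; and the input edges
`(a_1^i, a_2^j)` iff `x i j = 0` and `(b_1^i, b_2^j)` iff `y i j = 0`. -/
def vcRel (k logk : ℕ) (x y : Fin k → Fin k → Bool) (u v : VCVertex k logk) : Prop :=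
  (∃ (s ℓ : Bool) (i j : Fin k), i ≠ j ∧
    u = VCVertex.node s ℓ i ∧ v = VCVertex.node s ℓ j) ∨
  (∃ (s ℓ : Bool) (i : Fin k) (h : Fin logk), u = VCVertex.node s ℓ i ∧
    v = if i.val.testBit h.val then VCVertex.t s ℓ h else VCVertex.f s ℓ h) ∨
  (∃ (ℓ : Bool) (h : Fin logk),
    (u = VCVertex.f false ℓ h ∧ v = VCVertex.t false ℓ h) ∨
    (u = VCVertex.t false ℓ h ∧ v = VCVertex.f true ℓ h) ∨
    (u = VCVertex.f true ℓ h ∧ v = VCVertex.t true ℓ h) ∨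
    (u = VCVertex.t true ℓ h ∧ v = VCVertex.f false ℓ h)) ∨
  (∃ i j : Fin k, x i j = false ∧
    u = VCVertex.node false false i ∧ v = VCVertex.node false true j) ∨
  (∃ i j : Fin k, y i j = false ∧
    u = VCVertex.node true false i ∧ v = VCVertex.node true true j)

/-- The vertex-cover lower-bound graph `G_{x,y}`. -/
def vcGraph (k logk : ℕ) (x y : Fin k → Fin k → Bool) : SimpleGraph (VCVertex k logk) :=
  SimpleGraph.fromRel (vcRel k logk x y)

/-- `U` is a vertex cover: every edge has at least one endpoint in `U`. -/
def IsVertexCover {V : Type*} (G : SimpleGraph V) (U : Set V) : Prop :=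
  ∀ u v, G.Adj u v → u ∈ U ∨ v ∈ U

/-- A vertex is a bit-node (one of the `f`/`t` vertices). -/
def IsBitNode (k logk : ℕ) (v : VCVertex k logk) : Prop :=
  (∃ s ℓ h, v = VCVertex.f s ℓ h) ∨ (∃ s ℓ h, v = VCVertex.t s ℓ h)
instance vcFinite (k logk : ℕ) : Finite (VCVertex k logk) := by
  have hinj : Function.Injective (fun v : VCVertex k logk => match v with
      | .node s ℓ i => (Sum.inl (s, ℓ, i) : (Bool × Bool × Fin k) ⊕ (Bool × Bool × Fin logk) ⊕ (Bool × Bool × Fin logk))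
      | .f s ℓ h => Sum.inr (Sum.inl (s, ℓ, h))
      | .t s ℓ h => Sum.inr (Sum.inr (s, ℓ, h))) := by
    intro a b hab
    cases a <;> cases b <;> simp_all
  exact Finite.of_injective _ hinj

/-- every vertex cover of the vertex-cover lower-bound graph
`G_{x,y}` contains at least `k − 1` nodes from each of the four cliques
`A_1, A_2, B_1, B_2`, and at least `4 · log k` bit-nodes. -/
theorem vcGraph_cover_lower_bounds (k logk : ℕ) (hk : 2 ≤ k) (hpow : k = 2 ^ logk)
    (x y : Fin k → Fin k → Bool) (U : Set (VCVertex k logk))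
    (hU : IsVertexCover (vcGraph k logk x y) U) :
    (∀ s ℓ : Bool, k - 1 ≤ (U ∩ {v | ∃ i, v = VCVertex.node s ℓ i}).ncard) ∧
    4 * logk ≤ (U ∩ {v | IsBitNode k logk v}).ncard := by
  constructor
  · intro s ℓ
    set C : Set (VCVertex k logk) := {v | ∃ i, v = VCVertex.node s ℓ i} with hC
    have hrange : C = Set.range (VCVertex.node s ℓ) := by
      ext v; simp [hC, Set.range, eq_comm]
    have hinj : Function.Injective (VCVertex.node s ℓ (k := k) (logk := logk)) := by
      intro i j h; simpa using h
    have hCcard : C.ncard = k := by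
      rw [hrange, ← Nat.card_coe_set_eq, Nat.card_range_of_injective hinj]
      simp
    have hss : (C \ U).Subsingleton := by
      intro u hu v hv
      by_contra hne
      obtain ⟨i, rfl⟩ := hu.1
      obtain ⟨j, rfl⟩ := hv.1
      have hij : i ≠ j := by intro h; exact hne (by rw [h])
      have hadj : (vcGraph k logk x y).Adj (.node s ℓ i) (.node s ℓ j) := by
        rw [vcGraph, SimpleGraph.fromRel_adj]
        exact ⟨hne, Or.inl (Or.inl ⟨s, ℓ, i, j, hij, rfl, rfl⟩)⟩
      rcases hU _ _ hadj with h | h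
      · exact hu.2 h
      · exact hv.2 h
    have h1 : (C \ U).ncard ≤ 1 := by
      rcases hss.eq_empty_or_singleton with h | ⟨a, h⟩ <;> simp [h]
    have hdisj : Disjoint (U ∩ C) (C \ U) := by
      apply Set.disjoint_left.mpr
      rintro v ⟨hv, _⟩ ⟨_, hv2⟩
      exact hv2 hv
    have hunion : (U ∩ C) ∪ (C \ U) = C := by
      ext v; constructor
      · rintro (⟨_, h⟩ | ⟨h, _⟩) <;> exact h
      · intro h
        by_cases hv : v ∈ U
        · exact Or.inl ⟨hv, h⟩
        · exact Or.inr ⟨h, hv⟩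
    have := Set.ncard_union_eq hdisj (Set.toFinite _) (Set.toFinite _)
    rw [hunion, hCcard] at this
    omega
  · -- bit-node part
    have hex : ∀ (b ℓ : Bool) (h : Fin logk),
        ∃ u, u ∈ U ∧ (u = VCVertex.f b ℓ h ∨ u = VCVertex.t b ℓ h) := by
      intro b ℓ h
      have hadj : (vcGraph k logk x y).Adj (.f b ℓ h) (.t b ℓ h) := by
        rw [vcGraph, SimpleGraph.fromRel_adj]
        refine ⟨by simp, Or.inl (Or.inr (Or.inr (Or.inl ⟨ℓ, h, ?_⟩)))⟩
        cases b
        · exact Or.inl ⟨rfl, rfl⟩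
        · exact Or.inr (Or.inr (Or.inl ⟨rfl, rfl⟩))
      rcases hU _ _ hadj with h' | h'
      · exact ⟨_, h', Or.inl rfl⟩
      · exact ⟨_, h', Or.inr rfl⟩
    choose g hg1 hg2 using fun p : Bool × Bool × Fin logk => hex p.1 p.2.1 p.2.2
    have hginj : Function.Injective g := by
      intro p q hpq
      obtain ⟨b1, l1, h1⟩ := p
      obtain ⟨b2, l2, h2⟩ := q
      rcases hg2 (b1, l1, h1) with h | h <;> rcases hg2 (b2, l2, h2) with h' | h' <;>
        rw [h, h'] at hpq <;> simp_all
    have hsub : Set.range g ⊆ U ∩ {v | IsBitNode k logk v} := by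
      rintro v ⟨p, rfl⟩
      refine ⟨hg1 p, ?_⟩
      rcases hg2 p with h | h
      · exact Or.inl ⟨_, _, _, h⟩
      · exact Or.inr ⟨_, _, _, h⟩
    have hcard : (Set.range g).ncard = 4 * logk := by
      rw [← Nat.card_coe_set_eq, Nat.card_range_of_injective hginj]
      simp [Nat.card_eq_fintype_card]
      ring
    calc 4 * logk = (Set.range g).ncard := hcard.symm
      _ ≤ _ := Set.ncard_le_ncard hsub (Set.toFinite _)
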